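/- arXiv:2506.20147 — 2 statements merged into one kernel-verified Lean document; each statement's English description precedes it below -/
import Mathlib

section
/- Suppose every η-cluster has the property that any ball of radius √η·t^{4/3} contains fewer than L points of the cluster that are pairwise at least η t^{4/3} apart (with η ≤ 1/(4L²)). Then no η-cluster can have diameter exceeding √η·t^{4/3}. Abstractly: let S be a subset of a metric space that is η t^{4/3}-chain-connected (any two points joined by a chain with consecutive gaps ≤ η t^{4/3}); if diam(S) > √η t^{4/3}, then the ball of radius √η t^{4/3} around any point x ∈ S realizing the diameter contains at least 1/(2√η) > L points of S that are pairwise at least η t^{4/3} apart — each annulus {z : (k−1)η t^{4/3} ≤ d(z,x) ≤ kη t^{4/3}} for k = 1,...,⌊1/√η⌋ contains a point of S. -/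
lemma exists_chain_point_aux {X : Type*} [MetricSpace X] {x : X} {n : ℕ} {c : ℕ → X}
    {r a : ℝ} (h0 : c 0 = x) (hstep : ∀ i < n, dist (c i) (c (i + 1)) ≤ r)
    (ha : 0 < a) (hay : a ≤ dist (c n) x) :
    ∃ i, i ≤ n ∧ a ≤ dist (c i) x ∧ dist (c i) x ≤ a + r := by
  classical
  have hex : ∃ i, a ≤ dist (c i) x := ⟨n, hay⟩
  set i := Nat.find hex with hi_def
  have hi : a ≤ dist (c i) x := Nat.find_spec hex
  have hile : i ≤ n := Nat.find_min' hex hay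
  have hi0 : i ≠ 0 := by
    intro h
    rw [h, h0, dist_self] at hi
    linarith
  obtain ⟨j, hj⟩ : ∃ j, i = j + 1 := ⟨i - 1, (Nat.succ_pred_eq_of_ne_zero hi0).symm⟩
  have hjlt : j < i := by omega
  have hjn : j < n := by omega
  have hjlt' : ¬ a ≤ dist (c j) x := Nat.find_min hex hjlt
  refine ⟨i, hile, hi, ?_⟩
  have h1 : dist (c i) x ≤ dist (c i) (c j) + dist (c j) x := dist_triangle _ _ _
  have h2 : dist (c i) (c j) ≤ r := by
    rw [hj, dist_comm]; exact hstep j hjn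
  push_neg at hjlt'
  linarith

/-- If `S` is `η t^{4/3}`-chain-connected and no ball of radius `√η t^{4/3}` contains `L`
points of `S` that are pairwise `≥ η t^{4/3}` apart (with `η < 1/(4L²)`), then
`diam S ≤ √η t^{4/3}`. -/
theorem stmt_16 {X : Type*} [MetricSpace X] (t η : ℝ) (L : ℕ)
    (ht : 0 < t) (hη : η ∈ Set.Ioo (0:ℝ) 1) (hL : 1 ≤ L)
    (hηL : η < 1 / (4 * (L : ℝ) ^ 2)) (S : Set X)
    (hchain : ∀ x ∈ S, ∀ y ∈ S, ∃ (n : ℕ) (c : ℕ → X),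
      c 0 = x ∧ c n = y ∧ (∀ i ≤ n, c i ∈ S) ∧
      ∀ i < n, dist (c i) (c (i + 1)) ≤ η * t ^ ((4:ℝ)/3))
    (hball : ∀ (x : X) (Pk : Finset X),
      (↑Pk ⊆ S ∩ Metric.closedBall x (Real.sqrt η * t ^ ((4:ℝ)/3))) →
      (∀ p ∈ Pk, ∀ q ∈ Pk, p ≠ q → η * t ^ ((4:ℝ)/3) ≤ dist p q) →
      Pk.card < L) :
    ∀ x ∈ S, ∀ y ∈ S, dist x y ≤ Real.sqrt η * t ^ ((4:ℝ)/3) := by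
  classical
  set T : ℝ := t ^ ((4:ℝ)/3) with hT_def
  have hT : 0 < T := Real.rpow_pos_of_pos ht _
  set s : ℝ := Real.sqrt η with hs_def
  have hs0 : 0 < s := Real.sqrt_pos.mpr hη.1
  have hs2 : s ^ 2 = η := Real.sq_sqrt hη.1.le
  have hLpos : (0:ℝ) < (L:ℝ) := by exact_mod_cast Nat.pos_of_ne_zero (by omega)
  -- s < 1/(2L)
  have h4 : (0:ℝ) < 4 * (L:ℝ) ^ 2 := by positivity
  have hη' : η * (4 * (L:ℝ) ^ 2) < 1 := (lt_div_iff₀ h4).mp hηL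
  have hsL : 2 * (L:ℝ) * s < 1 := by
    nlinarith [mul_pos hLpos hs0]
  set r : ℝ := η * T with hr_def
  set R : ℝ := s * T with hR_def
  have hr0 : 0 < r := mul_pos hη.1 hT
  have hR0 : 0 < R := mul_pos hs0 hT
  have hrR : 2 * (L:ℝ) * r < R := by
    have : r = s * R := by rw [hr_def, hR_def, ← hs2]; ring
    rw [this]
    nlinarith
  intro x hx y hy
  by_contra hgt
  push_neg at hgt
  obtain ⟨n, c, hc0, hcn, hcS, hcstep⟩ := hchain x hx y hy
  have H : ∀ k : ℕ, 0 < k → k < L →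
      ∃ z, z ∈ S ∧ (2 * (k:ℝ) - 1) * r ≤ dist z x ∧ dist z x ≤ 2 * (k:ℝ) * r := by
    intro k hk hkL
    have hkL' : (k:ℝ) ≤ (L:ℝ) - 1 := by
      have : (k:ℝ) + 1 ≤ (L:ℝ) := by exact_mod_cast hkL
      linarith
    have ha : 0 < (2 * (k:ℝ) - 1) * r := by
      have : (1:ℝ) ≤ (k:ℝ) := by exact_mod_cast hk
      nlinarith
    have hay : (2 * (k:ℝ) - 1) * r ≤ dist (c n) x := by
      rw [hcn, dist_comm]
      have h1 : (2 * (k:ℝ) - 1) * r ≤ 2 * (L:ℝ) * r := by nlinarith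
      linarith
    obtain ⟨i, hin, h1, h2⟩ := exists_chain_point_aux hc0 hcstep ha hay
    exact ⟨c i, hcS i hin, h1, by linarith⟩
  set f : ℕ → X := fun k => if hk : 0 < k ∧ k < L then (H k hk.1 hk.2).choose else x
    with hf_def
  have hspec : ∀ k (hk : 0 < k) (hkL : k < L),
      f k ∈ S ∧ (2 * (k:ℝ) - 1) * r ≤ dist (f k) x ∧ dist (f k) x ≤ 2 * (k:ℝ) * r := by
    intro k hk hkL
    simp only [hf_def, dif_pos (And.intro hk hkL)]
    exact (H k hk hkL).choose_spec
  have hfS : ∀ k, k < L → f k ∈ S := by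
    intro k hk
    by_cases h : k = 0
    · simp [hf_def, h, hx]
    · exact (hspec k (Nat.pos_of_ne_zero h) hk).1
  have hfup : ∀ k, k < L → dist (f k) x ≤ 2 * (k:ℝ) * r := by
    intro k hk
    by_cases h : k = 0
    · simp [hf_def, h]
    · exact (hspec k (Nat.pos_of_ne_zero h) hk).2.2
  have hflow : ∀ k, 0 < k → k < L → (2 * (k:ℝ) - 1) * r ≤ dist (f k) x := by
    intro k hk hkL
    exact (hspec k hk hkL).2.1
  have hsep : ∀ j k, j < k → k < L → r ≤ dist (f j) (f k) := by
    intro j k hjk hkL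
    have hk0 : 0 < k := by omega
    have h1 : (2 * (k:ℝ) - 1) * r ≤ dist (f k) x := hflow k hk0 hkL
    have h2 : dist (f j) x ≤ 2 * (j:ℝ) * r := hfup j (by omega)
    have h3 : dist (f k) x ≤ dist (f k) (f j) + dist (f j) x := dist_triangle _ _ _
    have hjk' : (j:ℝ) + 1 ≤ (k:ℝ) := by exact_mod_cast hjk
    rw [dist_comm]
    nlinarith
  have hinj : Set.InjOn f (Finset.range L) := by
    intro a ha b hb hab
    simp only [Finset.coe_range, Set.mem_Iio] at ha hb
    by_contra hne
    rcases lt_or_gt_of_ne hne with h | h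
    · have := hsep a b h hb
      rw [hab, dist_self] at this; linarith
    · have := hsep b a h ha
      rw [hab, dist_self] at this; linarith
  set Pk : Finset X := (Finset.range L).image f with hPk_def
  have hcard : Pk.card = L := by
    rw [hPk_def, Finset.card_image_of_injOn hinj, Finset.card_range]
  have hsub : ↑Pk ⊆ S ∩ Metric.closedBall x (Real.sqrt η * t ^ ((4:ℝ)/3)) := by
    intro p hp
    simp only [hPk_def, Finset.coe_image, Finset.coe_range, Set.mem_image,
      Set.mem_Iio] at hp
    obtain ⟨k, hk, rfl⟩ := hp
    refine ⟨hfS k hk, ?_⟩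
    rw [Metric.mem_closedBall]
    have h1 : dist (f k) x ≤ 2 * (k:ℝ) * r := hfup k hk
    have h2 : (k:ℝ) ≤ (L:ℝ) := by exact_mod_cast hk.le
    have : Real.sqrt η * t ^ ((4:ℝ)/3) = R := rfl
    rw [this]
    nlinarith
  have hsep' : ∀ p ∈ Pk, ∀ q ∈ Pk, p ≠ q → η * t ^ ((4:ℝ)/3) ≤ dist p q := by
    intro p hp q hq hpq
    simp only [hPk_def, Finset.mem_image, Finset.mem_range] at hp hq
    obtain ⟨j, hj, rfl⟩ := hp
    obtain ⟨k, hk, rfl⟩ := hq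
    have hne : j ≠ k := fun h => hpq (by rw [h])
    have : η * t ^ ((4:ℝ)/3) = r := rfl
    rw [this]
    rcases lt_or_gt_of_ne hne with h | h
    · exact hsep j k h hk
    · rw [dist_comm]; exact hsep k j h hj
  have := hball x Pk hsub hsep'
  omega
end

section
/- Let S be a subset of a metric space that is r-chain-connected (any two points of S are joined by a chain in S with consecutive distances ≤ r). If there exist x, y ∈ S with d(x,y) ≥ 2Lr, then S contains L points that are pairwise at distance ≥ r: namely, picking for each k = 1,...,2L a point x_k of S in the annulus {z : (k−1)r ≤ d(z,x) ≤ kr}, the points x₂, x₄, ..., x_{2L} are pairwise ≥ r apart. -/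
/-- If `S` is `r`-chain-connected and contains two points at distance `≥ 2Lr`, then `S`
contains `L` points that are pairwise `≥ r` apart. -/
theorem stmt_17 {X : Type*} [MetricSpace X] (r : ℝ) (hr : 0 < r) (L : ℕ) (hL : 1 ≤ L)
    (S : Set X)
    (hchain : ∀ x ∈ S, ∀ y ∈ S, ∃ (n : ℕ) (c : ℕ → X),
      c 0 = x ∧ c n = y ∧ (∀ i ≤ n, c i ∈ S) ∧ ∀ i < n, dist (c i) (c (i + 1)) ≤ r)
    (x y : X) (hx : x ∈ S) (hy : y ∈ S) (hxy : 2 * (L : ℝ) * r ≤ dist x y) :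
    ∃ Pk : Finset X, ↑Pk ⊆ S ∧ Pk.card = L ∧
      ∀ p ∈ Pk, ∀ q ∈ Pk, p ≠ q → r ≤ dist p q := by
  classical
  obtain ⟨n, c, hc0, hcn, hcS, hstep⟩ := hchain x hx y hy
  set f : ℕ → ℝ := fun i => dist (c i) x with hf
  have hf0 : f 0 = 0 := by simp [hf, hc0]
  have hfn : 2 * (L : ℝ) * r ≤ f n := by
    simpa [hf, hcn, dist_comm] using hxy
  -- annulus points
  have hann : ∀ k, k < L → ∃ z ∈ S,
      (2 * (k : ℝ) + 1) * r ≤ dist z x ∧ dist z x ≤ (2 * (k : ℝ) + 2) * r := by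
    intro k hk
    have hkL : (2 * (k : ℝ) + 1) * r ≤ f n := by
      have : (k : ℝ) + 1 ≤ (L : ℝ) := by exact_mod_cast hk
      nlinarith
    have hP : ∃ i, (2 * (k : ℝ) + 1) * r ≤ f i := ⟨n, hkL⟩
    classical
    set i := Nat.find hP with hi
    have hPi : (2 * (k : ℝ) + 1) * r ≤ f i := Nat.find_spec hP
    have hin : i ≤ n := Nat.find_le hkL
    have hipos : i ≠ 0 := by
      intro h
      rw [h, hf0] at hPi
      nlinarith
    obtain ⟨m, hm⟩ := Nat.exists_eq_succ_of_ne_zero hipos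
    have hmn : m < n := by omega
    have hmlt : ¬ (2 * (k : ℝ) + 1) * r ≤ f m := Nat.find_min hP (by omega)
    push_neg at hmlt
    have hub : f i ≤ (2 * (k : ℝ) + 2) * r := by
      have htri : f (m + 1) ≤ dist (c m) (c (m + 1)) + f m := by
        simpa [hf, dist_comm] using dist_triangle (c (m + 1)) (c m) x
      have := hstep m hmn
      rw [hm]
      nlinarith
    exact ⟨c i, hcS i hin, hPi, hub⟩
  have : Nonempty X := ⟨x⟩
  choose! z hzS hz1 hz2 using hann
  -- key dist estimate for j < k
  have key : ∀ j k, j < k → k < L → r ≤ dist (z j) (z k) := by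
    intro j k hjk hkL
    have hjL : j < L := lt_trans hjk hkL
    have h1 := hz1 k hkL
    have h2 := hz2 j hjL
    have htri : dist (z k) x ≤ dist (z k) (z j) + dist (z j) x := dist_triangle _ _ _
    have hjk' : (j : ℝ) + 1 ≤ (k : ℝ) := by exact_mod_cast hjk
    have : r ≤ dist (z k) (z j) := by nlinarith
    rwa [dist_comm] at this
  have hinj : Set.InjOn z ↑(Finset.range L) := by
    intro j hj k hk h
    simp only [Finset.coe_range, Set.mem_Iio] at hj hk
    by_contra hne
    rcases lt_or_gt_of_ne hne with hlt | hlt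
    · have := key j k hlt hk
      rw [h] at this
      simp at this
      linarith
    · have := key k j hlt hj
      rw [h] at this
      simp at this
      linarith
  refine ⟨(Finset.range L).image z, ?_, ?_, ?_⟩
  · intro p hp
    simp only [Finset.coe_image, Finset.coe_range, Set.mem_image, Set.mem_Iio] at hp
    obtain ⟨k, hk, rfl⟩ := hp
    exact hzS k hk
  · rw [Finset.card_image_of_injOn hinj, Finset.card_range]
  · intro p hp q hq hpq
    simp only [Finset.mem_image, Finset.mem_range] at hp hq
    obtain ⟨j, hj, rfl⟩ := hp
    obtain ⟨k, hk, rfl⟩ := hq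
    have hne : j ≠ k := fun h => hpq (by rw [h])
    rcases lt_or_gt_of_ne hne with hlt | hlt
    · exact key j k hlt hk
    · rw [dist_comm]; exact key k j hlt hj
end
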